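/- For any nonempty group G ⊆ I and any distributed action d ∈ A*_G, there exist atomic group actions a'_0 ∈ A_{G'_0}, …, a'_m ∈ A_{G'_m} such that {G'_0, …, G'_m} is a partial partition of G and the distributed transition relation →_d equals the intersection ⋂_{0≤k≤m} →_{a'_k}. -/

import Mathlib

namespace DKH

/-- Groups of agents: subsets of the finite agent set `I = {i_0, …, i_{n-1}}`. -/
abbrev Grp (n : ℕ) := Finset (Fin n)

/-- The language DKH: φ ::= ⊤ | p | ¬φ | (φ∧φ) | K_G φ | Kh_G φ. -/
inductive Formula (P : Type) (n : ℕ) : Type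
  | top  : Formula P n
  | atom : P → Formula P n
  | neg  : Formula P n → Formula P n
  | and  : Formula P n → Formula P n → Formula P n
  | K    : Grp n → Formula P n → Formula P n
  | Kh   : Grp n → Formula P n → Formula P n

instance {P n} : Inhabited (Formula P n) := ⟨.top⟩

namespace Formula
/-- Defined implication φ → ψ := ¬(φ ∧ ¬ψ). -/
def imp {P n} (φ ψ : Formula P n) : Formula P n := .neg (φ.and ψ.neg)
/-- Defined falsum ⊥ := ¬⊤. -/
def bot {P : Type} {n : ℕ} : Formula P n := .neg .top
end Formula

/-- A model ⟨S, {∼_i}, {A_G}, {→_a}, V⟩. -/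
structure KhModel (P : Type) (n : ℕ) where
  State : Type
  Act : Type
  sim : Fin n → State → State → Prop
  sim_equiv : ∀ i, Equivalence (sim i)
  A : Grp n → Set Act
  A_empty : A ∅ = ∅
  A_disj : ∀ G H : Grp n, G ⊂ H → A G ∩ A H = ∅
  tr : Act → State → State → Prop
  V : P → Set State

/-- Distributed indistinguishability: s ∼_G t iff s ∼_i t for every i ∈ G. -/
def gsim {P n} (M : KhModel P n) (G : Grp n) (s t : M.State) : Prop :=
  ∀ i ∈ G, M.sim i s t

/-- Distributed actions: atomic group actions, or joint tuples ⟨d_0,…,d_k⟩. -/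
inductive DAct (Act : Type) : Type
  | atom : Act → DAct Act
  | joint : List (DAct Act) → DAct Act

mutual
/-- Distributed transition relation: →_{⟨d_0,…,d_k⟩} = ⋂_j →_{d_j}. -/
def dtr {Act State : Type} (tr : Act → State → State → Prop) :
    DAct Act → State → State → Prop
  | .atom a, s, t => tr a s t
  | .joint ds, s, t => dtrList tr ds s t

def dtrList {Act State : Type} (tr : Act → State → State → Prop) :
    List (DAct Act) → State → State → Prop
  | [], _, _ => True
  | d :: ds, s, t => dtr tr d s t ∧ dtrList tr ds s t
end

/-- `Gs` is a partial partition of `G`: a family of nonempty, pairwise disjoint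
blocks, all included in `G` (i.e. a partition of a subset of `G`). -/
def PartialPartition {n : ℕ} (G : Grp n) (Gs : List (Grp n)) : Prop :=
  (∀ B ∈ Gs, B ≠ ∅) ∧ Gs.Pairwise (fun B C => Disjoint B C) ∧ (∀ B ∈ Gs, B ⊆ G)

/-- The fixed ordering on mutually disjoint nonempty groups: G ≺ H iff the
minimal index of an agent in G is below that of H. -/
def grpLt {n : ℕ} (B C : Grp n) : Prop := B.min < C.min

/-- Membership in the set A*_G of distributed actions of group G:
the closure of A^+_G = ⋃_{G'⊆G} A_{G'} under forming joint actions
⟨d_0,…,d_k⟩ ∈ A*_{G_0} × ⋯ × A*_{G_k} for non-trivial partial partitions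
{G_0,…,G_k} of G listed in the fixed order ≺. -/
inductive star {n : ℕ} {Act : Type} (A : Grp n → Set Act) : Grp n → DAct Act → Prop
  | base {G G' : Grp n} {a : Act} :
      G' ⊆ G → a ∈ A G' → star A G (.atom a)
  | joint {G : Grp n} {Gs : List (Grp n)} {ds : List (DAct Act)} :
      2 ≤ Gs.length → PartialPartition G Gs → Gs.Chain' grpLt →
      List.Forall₂ (star A) Gs ds → star A G (.joint ds)

/-- Membership in A^+_G = ⋃_{G'⊆G} A_{G'} (as a set of distributed actions). -/
def inAplus {n : ℕ} {Act : Type} (A : Grp n → Set Act) (G : Grp n) (d : DAct Act) : Prop :=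
  ∃ G' : Grp n, G' ⊆ G ∧ ∃ a ∈ A G', d = .atom a

/-- d is executable on X if every s ∈ X has a d-successor. -/
def ExecutableOn {P n} (M : KhModel P n) (d : DAct M.Act) (X : Set M.State) : Prop :=
  ∀ s ∈ X, ∃ t, dtr M.tr d s t

/-- A strategy of group G: a partial function from ∼_G-equivalence classes to
A*_G such that the prescribed action is executable on the class. -/
structure Strategy {P n} (M : KhModel P n) (G : Grp n) where
  act : M.State → Option (DAct M.Act)
  uniform : ∀ s t, gsim M G s t → act s = act t
  mem_star : ∀ s d, act s = some d → star M.A G d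
  exec : ∀ s d, act s = some d → ∀ t, gsim M G s t → ∃ u, dtr M.tr d t u

/-- One step of an execution: [s]_G →_{σ([s]_G)} [t]_G. -/
def stepRel {P n} {M : KhModel P n} {G : Grp n} (σ : Strategy M G) (s t : M.State) : Prop :=
  ∃ d, σ.act s = some d ∧ ∃ u v, gsim M G s u ∧ gsim M G t v ∧ dtr M.tr d u v

/-- Leaf-nodes of the finite complete executions of σ starting from [s]_G,
as a ∼_G-closed set of states. -/
def CELeaf {P n} {M : KhModel P n} {G : Grp n} (σ : Strategy M G) (s : M.State) :
    Set M.State :=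
  {t | ∃ (m : ℕ) (f : ℕ → M.State), gsim M G s (f 0) ∧
    (∀ j < m, stepRel σ (f j) (f (j+1))) ∧ σ.act (f m) = none ∧ gsim M G (f m) t}

/-- There is an infinite (hence complete) execution of σ starting from [s]_G. -/
def InfiniteFrom {P n} {M : KhModel P n} {G : Grp n} (σ : Strategy M G) (s : M.State) : Prop :=
  ∃ f : ℕ → M.State, gsim M G s (f 0) ∧ ∀ j, stepRel σ (f j) (f (j+1))

/-- Inner-nodes of the complete executions of σ starting from [s]_G,
as a ∼_G-closed set of states. -/
def CEInner {P n} {M : KhModel P n} {G : Grp n} (σ : Strategy M G) (s : M.State) :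
    Set M.State :=
  {t | (∃ (m : ℕ) (f : ℕ → M.State), gsim M G s (f 0) ∧
          (∀ j < m, stepRel σ (f j) (f (j+1))) ∧ σ.act (f m) = none ∧
          ∃ j < m, gsim M G (f j) t) ∨
       (∃ f : ℕ → M.State, gsim M G s (f 0) ∧
          (∀ j, stepRel σ (f j) (f (j+1))) ∧ ∃ j, gsim M G (f j) t)}

/-- Truth at a pointed model. -/
def Sat {P n} (M : KhModel P n) : M.State → Formula P n → Prop
  | _, .top => True
  | s, .atom p => s ∈ M.V p
  | s, .neg φ => ¬ Sat M s φ
  | s, .and φ ψ => Sat M s φ ∧ Sat M s ψ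
  | s, .K G φ => ∀ t, gsim M G s t → Sat M t φ
  | s, .Kh G φ => ∃ σ : Strategy M G,
      (∀ t ∈ CELeaf σ s, Sat M t φ) ∧ ¬ InfiniteFrom σ s

/-- Boolean evaluation treating ⊤, ¬, ∧ as connectives and everything else
as atoms; used to define propositional tautologies. -/
def beval {P n} (v : Formula P n → Bool) : Formula P n → Bool
  | .top => true
  | .atom p => v (.atom p)
  | .neg φ => !(beval v φ)
  | .and φ ψ => beval v φ && beval v ψ
  | .K G φ => v (.K G φ)
  | .Kh G φ => v (.Kh G φ)

/-- Instances of propositional tautologies. -/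
def IsTaut {P n} (φ : Formula P n) : Prop := ∀ v, beval v φ = true

/-- The proof system SDKH. -/
inductive Provable {P : Type} {n : ℕ} : Formula P n → Prop
  | taut {φ} : IsTaut φ → Provable φ
  | distK {G : Grp n} {φ ψ} :
      Provable (((Formula.K G φ).and (Formula.K G (φ.imp ψ))).imp (Formula.K G ψ))
  | axT {G : Grp n} {φ} : Provable ((Formula.K G φ).imp φ)
  | ax4 {G : Grp n} {φ} : Provable ((Formula.K G φ).imp (Formula.K G (Formula.K G φ)))
  | ax5 {G : Grp n} {φ} :
      Provable ((Formula.neg (Formula.K G φ)).imp (Formula.K G (Formula.neg (Formula.K G φ))))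
  | axKMono {G H : Grp n} {φ} : G ⊆ H → Provable ((Formula.K G φ).imp (Formula.K H φ))
  | axKhMono {G H : Grp n} {φ} : G ⊆ H → Provable ((Formula.Kh G φ).imp (Formula.Kh H φ))
  | axKtoKh {G : Grp n} {φ} : Provable ((Formula.K G φ).imp (Formula.Kh G φ))
  | axEmpKhtoK {φ} : Provable ((Formula.Kh ∅ φ).imp (Formula.K ∅ φ))
  | axKhtoKKh {G : Grp n} {φ} : Provable ((Formula.Kh G φ).imp (Formula.K G (Formula.Kh G φ)))
  | axEmpMono {G : Grp n} {φ ψ} :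
      Provable ((Formula.K ∅ (φ.imp ψ)).imp (Formula.K ∅ ((Formula.Kh G φ).imp (Formula.Kh G ψ))))
  | axKhbot {G : Grp n} : Provable ((Formula.Kh G Formula.bot).imp Formula.bot)
  | axKhtoKhK {G : Grp n} {φ} : Provable ((Formula.Kh G φ).imp (Formula.Kh G (Formula.K G φ)))
  | axKhKh {G : Grp n} {φ} : Provable ((Formula.Kh G (Formula.Kh G φ)).imp (Formula.Kh G φ))
  | mp {φ ψ} : Provable (φ.imp ψ) → Provable φ → Provable ψ
  | necK {G : Grp n} {φ} : Provable φ → Provable (Formula.K G φ)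

/-- Conjunction of a finite list of formulas. -/
def conj {P n} (L : List (Formula P n)) : Formula P n := L.foldr Formula.and Formula.top

/-- SDKH-consistency of a set of formulas. -/
def Consistent {P n} (X : Set (Formula P n)) : Prop :=
  ¬ ∃ L : List (Formula P n), (∀ φ ∈ L, φ ∈ X) ∧ Provable ((conj L).imp Formula.bot)

/-- Maximal consistent sets. -/
def MCS {P n} (X : Set (Formula P n)) : Prop :=
  Consistent X ∧ ∀ φ ∉ X, ¬ Consistent (insert φ X)

/-! ### The canonical model -/

/-- One step ⟨(φ,G),H⟩X of a mixed sequence. -/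
structure CStep (P : Type) (n : ℕ) where
  fml : Formula P n
  G : Grp n
  H : Grp n
  X : Set (Formula P n)

instance {P n} : Inhabited (CStep P n) := ⟨⟨.top, ∅, ∅, ∅⟩⟩

/-- The conditions on a mixed sequence X_0⟨(φ_1,G_1),H_1⟩X_1⋯⟨(φ_n,G_n),H_n⟩X_n
(the previous MCS being `X`). -/
def goodFrom {P n} : Set (Formula P n) → List (CStep P n) → Prop
  | _, [] => True
  | X, c :: rest =>
      MCS c.X ∧ c.G ≠ ∅ ∧ (Formula.Kh c.G c.fml) ∈ X ∧ (Formula.K c.G c.fml) ∈ c.X ∧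
      (∀ ψ, (Formula.K c.H ψ) ∈ X → ψ ∈ c.X) ∧ goodFrom c.X rest

/-- The final MCS `ed(s)` of a mixed sequence. -/
def edOf {P n} (X0 : Set (Formula P n)) (l : List (CStep P n)) : Set (Formula P n) :=
  l.foldl (fun _ c => c.X) X0

/-- States of the canonical model: mixed sequences starting at X_0. -/
def CState {P : Type} {n : ℕ} (X0 : Set (Formula P n)) := {l : List (CStep P n) // goodFrom X0 l}

/-- Canonical epistemic relation ∼^c_i. -/
def csim {P n} (X0 : Set (Formula P n)) (i : Fin n) (s t : CState X0) : Prop :=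
  ∃ k : ℕ, k ≤ s.1.length ∧ k ≤ t.1.length ∧
    (∀ j < k, (s.1.getD j default).X = (t.1.getD j default).X ∧
              (s.1.getD j default).H = (t.1.getD j default).H) ∧
    (∀ j, k ≤ j → j < s.1.length → i ∈ (s.1.getD j default).H) ∧
    (∀ j, k ≤ j → j < t.1.length → i ∈ (t.1.getD j default).H)

/-- Canonical atomic actions: pairs (φ, G). -/
abbrev CAct (P : Type) (n : ℕ) := Formula P n × Grp n

/-- Canonical atomic action sets A^c_G = {(φ,G) : φ ∈ DKH} for G ≠ ∅, A^c_∅ = ∅. -/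
def cA {P : Type} {n : ℕ} (G : Grp n) : Set (CAct P n) := {a | a.2 = G ∧ G ≠ ∅}

/-- Canonical transition: s →_{(φ,G)} t iff t = s⟨(φ,G),G'⟩X for some G' and MCS X. -/
def ctr {P n} (X0 : Set (Formula P n)) (a : CAct P n) (s t : CState X0) : Prop :=
  ∃ (G' : Grp n) (Y : Set (Formula P n)), MCS Y ∧ t.1 = s.1 ++ [⟨a.1, a.2, G', Y⟩]

theorem csim_equiv {P n} (X0 : Set (Formula P n)) (i : Fin n) : Equivalence (csim X0 i) := by
  constructor
  · intro s
    exact ⟨s.1.length, le_rfl, le_rfl, fun j _ => ⟨rfl, rfl⟩,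
      fun j h1 h2 => absurd h2 (by omega), fun j h1 h2 => absurd h2 (by omega)⟩
  · rintro s t ⟨k, h1, h2, h3, h4, h5⟩
    exact ⟨k, h2, h1, fun j hj => ⟨(h3 j hj).1.symm, (h3 j hj).2.symm⟩, h5, h4⟩
  · rintro s t u ⟨k1, hk1s, hk1t, heq1, hs1, ht1⟩ ⟨k2, hk2t, hk2u, heq2, ht2, hu2⟩
    refine ⟨min k1 k2, le_trans (min_le_left _ _) hk1s, le_trans (min_le_right _ _) hk2u,
      ?_, ?_, ?_⟩
    · intro j hj
      have e1 := heq1 j (lt_of_lt_of_le hj (min_le_left _ _))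
      have e2 := heq2 j (lt_of_lt_of_le hj (min_le_right _ _))
      exact ⟨e1.1.trans e2.1, e1.2.trans e2.2⟩
    · intro j hj hjs
      by_cases h : k1 ≤ j
      · exact hs1 j h hjs
      · have hj2 : k2 ≤ j := by omega
        have hjt : j < t.1.length := by omega
        have := ht2 j hj2 hjt
        have e := (heq1 j (by omega)).2
        rw [e]; exact this
    · intro j hj hju
      by_cases h : k2 ≤ j
      · exact hu2 j h hju
      · have hj1 : k1 ≤ j := by omega
        have hjt : j < t.1.length := by omega
        have := ht1 j hj1 hjt
        have e := (heq2 j (by omega)).2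
        rw [← e]; exact this

theorem cA_empty {P : Type} {n : ℕ} : (cA (P := P) (n := n) ∅) = ∅ := by
  ext a; simp [cA]

theorem cA_disj {P : Type} {n : ℕ} (G H : Grp n) (h : G ⊂ H) :
    cA (P := P) (n := n) G ∩ cA H = ∅ := by
  ext a
  simp only [Set.mem_inter_iff, Set.mem_empty_iff_false, iff_false, cA, Set.mem_setOf_eq]
  rintro ⟨⟨rfl, -⟩, ⟨h2, -⟩⟩
  exact h.ne h2

/-- The canonical model M^c(X_0). -/
def canonicalModel {P : Type} {n : ℕ} (X0 : Set (Formula P n)) : KhModel P n where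
  State := CState X0
  Act := CAct P n
  sim := csim X0
  sim_equiv := csim_equiv X0
  A := cA
  A_empty := cA_empty
  A_disj := cA_disj
  tr := ctr X0
  V := fun p => {s : CState X0 | Formula.atom p ∈ edOf X0 s.1}


/-! The witness is the list of leaves of `d`. A joint transition is the intersection of its
components' transitions, so `→_d` is the intersection of the relations of the leaves. The groups
of the leaves refine, level by level, the partial partitions used to build `d`, and refining each
block of a partial partition by a partial partition of that block again gives a partial
partition. Every leaf's group is nonempty because `A ∅ = ∅`. -/

section Decomposition

variable {n : ℕ} {Act State : Type}

def DAct.atoms : DAct Act → List Act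
  | .atom a => [a]
  | .joint ds => ds.flatMap fun d => d.atoms

theorem dtrList_iff_forall_mem (tr : Act → State → State → Prop) (ds : List (DAct Act))
    (s t : State) : dtrList tr ds s t ↔ ∀ d ∈ ds, dtr tr d s t := by
  induction ds with
  | nil => simp [dtrList]
  | cons d ds ih => simp [dtrList, ih]

theorem dtr_iff_forall_mem_atoms (tr : Act → State → State → Prop) :
    ∀ (d : DAct Act) (s t : State), dtr tr d s t ↔ ∀ a ∈ d.atoms, tr a s t
  | .atom a, s, t => by simp [dtr, DAct.atoms]
  | .joint ds, s, t => by
    simp only [dtr, dtrList_iff_forall_mem, DAct.atoms, List.mem_flatMap]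
    constructor
    · rintro h a ⟨d, hd, ha⟩
      exact (dtr_iff_forall_mem_atoms tr d s t).1 (h d hd) a ha
    · intro h d hd
      exact (dtr_iff_forall_mem_atoms tr d s t).2 fun a ha => h a ⟨d, hd, ha⟩

@[elab_as_elim]
theorem star.induction {A : Grp n → Set Act} {motive : Grp n → DAct Act → Prop}
    (base : ∀ {G G' a}, G' ⊆ G → a ∈ A G' → motive G (.atom a))
    (joint : ∀ {G Gs ds}, 2 ≤ Gs.length → PartialPartition G Gs →
      List.Forall₂ motive Gs ds → motive G (.joint ds))
    {G : Grp n} {d : DAct Act} (hd : star A G d) : motive G d :=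
  star.rec (motive_1 := fun G d _ => motive G d)
    (motive_2 := fun Gs ds _ => List.Forall₂ motive Gs ds)
    (fun hsub ha => base hsub ha) (fun hlen hpp _ _ ih => joint hlen hpp ih)
    .nil (fun _ _ ih ihs => .cons ih ihs) hd

theorem star.atoms_ne_nil {A : Grp n → Set Act} {G : Grp n} {d : DAct Act}
    (hd : star A G d) : d.atoms ≠ [] := by
  refine star.induction (fun _ _ => by simp [DAct.atoms]) (fun hlen _ ih => ?_) hd
  cases ih with
  | nil => simp at hlen
  | cons hd _ => simp [DAct.atoms, hd]

theorem PartialPartition.singleton {G B : Grp n} (hB : B ≠ ∅) (hBG : B ⊆ G) :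
    PartialPartition G [B] :=
  ⟨by simpa using hB, List.pairwise_singleton _ _, by simpa using hBG⟩

theorem exists_mem_subset_of_mem_flatten {Gs : List (Grp n)} {Hss : List (List (Grp n))}
    (h : List.Forall₂ PartialPartition Gs Hss) {H : Grp n} (hH : H ∈ Hss.flatten) :
    ∃ B ∈ Gs, H ⊆ B := by
  induction h with
  | nil => simp at hH
  | @cons B Hs Gs Hss hHs _ ih =>
    rcases List.mem_append.1 hH with hH | hH
    · exact ⟨B, List.mem_cons_self, hHs.2.2 H hH⟩
    · obtain ⟨C, hC, hHC⟩ := ih hH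
      exact ⟨C, List.mem_cons_of_mem _ hC, hHC⟩

theorem PartialPartition.flatten {G : Grp n} {Gs : List (Grp n)} {Hss : List (List (Grp n))}
    (hGs : PartialPartition G Gs) (h : List.Forall₂ PartialPartition Gs Hss) :
    PartialPartition G Hss.flatten := by
  induction h with
  | nil => exact ⟨by simp, List.Pairwise.nil, by simp⟩
  | @cons B Hs Gs Hss hHs hrest ih =>
    obtain ⟨hne, hpw, hsub⟩ := hGs
    have hB := List.pairwise_cons.1 hpw
    obtain ⟨ihne, ihpw, ihsub⟩ := ih ⟨fun C hC => hne C (.tail _ hC), hB.2,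
      fun C hC => hsub C (.tail _ hC)⟩
    refine ⟨?_, List.pairwise_append.2 ⟨hHs.2.1, ihpw, fun H hH K hK => ?_⟩, ?_⟩
    · exact List.forall_mem_append.2 ⟨hHs.1, ihne⟩
    · obtain ⟨C, hC, hKC⟩ := exists_mem_subset_of_mem_flatten hrest hK
      exact (hB.1 C hC).mono (hHs.2.2 H hH) hKC
    · exact List.forall_mem_append.2
        ⟨fun H hH => (hHs.2.2 H hH).trans (hsub B List.mem_cons_self), ihsub⟩

theorem exists_partialPartition_forall₂_flatMap {α β : Type*} {R : Grp n → β → Prop}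
    {f : α → List β} {G : Grp n} {Gs : List (Grp n)} {xs : List α}
    (hGs : PartialPartition G Gs)
    (h : List.Forall₂ (fun B x => ∃ Hs, PartialPartition B Hs ∧ List.Forall₂ R Hs (f x)) Gs xs) :
    ∃ Hs, PartialPartition G Hs ∧ List.Forall₂ R Hs (xs.flatMap f) := by
  obtain ⟨Hss, hpp, hR⟩ : ∃ Hss, List.Forall₂ PartialPartition Gs Hss ∧
      List.Forall₂ R Hss.flatten (xs.flatMap f) := by
    clear hGs
    induction h with
    | nil => exact ⟨[], .nil, .nil⟩
    | cons hx _ ih =>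
      obtain ⟨Hs, hHs, hRs⟩ := hx
      obtain ⟨Hss, hpp, hR⟩ := ih
      exact ⟨Hs :: Hss, .cons hHs hpp, List.rel_append hRs hR⟩
  exact ⟨Hss.flatten, hGs.flatten hpp, hR⟩

theorem star.exists_partialPartition_atoms {A : Grp n → Set Act} (hA : A ∅ = ∅) {G : Grp n}
    {d : DAct Act} (hd : star A G d) :
    ∃ Gs, PartialPartition G Gs ∧ List.Forall₂ (fun B a => a ∈ A B) Gs d.atoms := by
  refine star.induction (fun {_ B a} hBG ha => ?_) (fun _ hpp ih => ?_) hd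
  · have hB : B ≠ ∅ := by rintro rfl; simp [hA] at ha
    exact ⟨[B], .singleton hB hBG, by simpa [DAct.atoms] using ha⟩
  · simpa only [DAct.atoms] using exists_partialPartition_forall₂_flatMap hpp ih

end Decomposition

/-- For any nonempty group G and any d ∈ A*_G, there exist atomic
group actions a'_0 ∈ A_{G'_0}, …, a'_m ∈ A_{G'_m} such that {G'_0,…,G'_m} is a
partial partition of G and →_d = ⋂_{0≤k≤m} →_{a'_k}. -/
theorem dtr_eq_inter_of_atoms {P : Type} [Countable P] {n : ℕ}
    (M : KhModel P n) (G : Grp n) (hG : G ≠ ∅) (d : DAct M.Act)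
    (hd : star M.A G d) :
    ∃ (Gs : List (Grp n)) (as : List M.Act), as ≠ [] ∧
      PartialPartition G Gs ∧
      List.Forall₂ (fun B a => a ∈ M.A B) Gs as ∧
      (∀ s t : M.State, dtr M.tr d s t ↔ ∀ a ∈ as, M.tr a s t) := by
  obtain ⟨Gs, hGs, hatoms⟩ := hd.exists_partialPartition_atoms M.A_empty
  exact ⟨Gs, d.atoms, hd.atoms_ne_nil, hGs, hatoms, dtr_iff_forall_mem_atoms M.tr d⟩

end DKH
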